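/- (Stone) Every open cover of a metrizable topological space admits an open refinement that is σ-discrete, i.e., an open cover refining the given one which can be written as a countable union of discrete families. -/

import Mathlib

open Set Topology Cardinal

universe u v

/-- The equivalence relation on `[0,1] × I` identifying all points with first coordinate `0`. -/
def hedgehogSetoid (I : Type u) : Setoid (Set.Icc (0:ℝ) 1 × I) where
  r p q := ((p.1 : ℝ) = 0 ∧ (q.1 : ℝ) = 0) ∨ p = q
  iseqv := by
    refine ⟨fun p => Or.inr rfl, ?_, ?_⟩
    · rintro p q (⟨h1, h2⟩ | rfl)
      · exact Or.inl ⟨h2, h1⟩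
      · exact Or.inr rfl
    · rintro p q r (⟨h1, h2⟩ | rfl) hqr
      · rcases hqr with ⟨h3, h4⟩ | rfl
        · exact Or.inl ⟨h1, h4⟩
        · exact Or.inl ⟨h1, h2⟩
      · exact hqr

/-- The hedgehog with spines indexed by `I`, as a set (quotient of `[0,1] × I`). -/
abbrev Hedgehog (I : Type u) := Quotient (hedgehogSetoid I)

/-- The product topology on `[0,1] × I`, where `[0,1]` carries the usual topology and
`I` carries the discrete topology. -/
def hedgehogBaseTop (I : Type u) : TopologicalSpace (Set.Icc (0:ℝ) 1 × I) :=
  @instTopologicalSpaceProd _ _ inferInstance ⊥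

/-- The quotient topology on the hedgehog: the quotient hedgehog `J(κ)`. -/
def quotHedgehogTop (I : Type u) : TopologicalSpace (Hedgehog I) :=
  TopologicalSpace.coinduced (Quotient.mk (hedgehogSetoid I)) (hedgehogBaseTop I)

/-- The projection `π_κ : J(κ) → [0,1]`, sending `(t, j)` to `t`. -/
def hedgehogPiKappa {I : Type u} : Hedgehog I → Set.Icc (0:ℝ) 1 :=
  Quotient.lift Prod.fst (by
    rintro p q (⟨h1, h2⟩ | rfl)
    · exact Subtype.ext (h1.trans h2.symm)
    · rfl)

open Classical in
/-- The projection `π_i : J(κ) → [0,1]`, sending `(t, j)` to `t` if `j = i` and to `0`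
otherwise. -/
noncomputable def hedgehogProj {I : Type u} (i : I) : Hedgehog I → Set.Icc (0:ℝ) 1 :=
  Quotient.lift (fun p => if p.2 = i then p.1 else ⟨0, by norm_num⟩) (by
    rintro p q (⟨h1, h2⟩ | rfl)
    · have hp : p.1 = (⟨0, by norm_num⟩ : Set.Icc (0:ℝ) 1) := Subtype.ext h1
      have hq : q.1 = (⟨0, by norm_num⟩ : Set.Icc (0:ℝ) 1) := Subtype.ext h2
      split_ifs <;> simp [hp, hq]
    · rfl)

open Classical in
/-- The hedgehog metric: `d((t,i),(s,j)) = |t - s|` if `i = j` and `t + s` otherwise.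
(It is defined via representatives; the formula does not depend on the choice of
representatives.) -/
noncomputable def hedgehogDist {I : Type u} (x y : Hedgehog I) : ℝ :=
  if x.out.2 = y.out.2 then |(x.out.1 : ℝ) - (y.out.1 : ℝ)|
  else (x.out.1 : ℝ) + (y.out.1 : ℝ)

/-- The metric hedgehog `MJ(κ)`: the hedgehog equipped with the hedgehog metric. -/
noncomputable def metricHedgehog (I : Type u) : MetricSpace (Hedgehog I) where
  dist := hedgehogDist
  dist_self := by
    intro x
    show hedgehogDist x x = 0
    unfold hedgehogDist
    rw [if_pos rfl, sub_self, abs_zero]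
  dist_comm := by
    intro x y
    show hedgehogDist x y = hedgehogDist y x
    unfold hedgehogDist
    rcases eq_or_ne x.out.2 y.out.2 with h | h
    · rw [if_pos h, if_pos h.symm, abs_sub_comm]
    · rw [if_neg h, if_neg (Ne.symm h), add_comm]
  dist_triangle := by
    intro x y z
    show hedgehogDist x z ≤ hedgehogDist x y + hedgehogDist y z
    unfold hedgehogDist
    have hx0 : (0:ℝ) ≤ x.out.1 := x.out.1.2.1
    have hy0 : (0:ℝ) ≤ y.out.1 := y.out.1.2.1
    have hz0 : (0:ℝ) ≤ z.out.1 := z.out.1.2.1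
    have hxy : |(x.out.1:ℝ) - y.out.1| ≤ (x.out.1:ℝ) + y.out.1 :=
      abs_le.mpr ⟨by linarith, by linarith⟩
    have hyz : |(y.out.1:ℝ) - z.out.1| ≤ (y.out.1:ℝ) + z.out.1 :=
      abs_le.mpr ⟨by linarith, by linarith⟩
    have hxz : |(x.out.1:ℝ) - z.out.1| ≤ (x.out.1:ℝ) + z.out.1 :=
      abs_le.mpr ⟨by linarith, by linarith⟩
    have htri := abs_sub_le (x.out.1:ℝ) (y.out.1:ℝ) (z.out.1:ℝ)
    have h1 := le_abs_self ((x.out.1:ℝ) - y.out.1)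
    have h2 := neg_abs_le ((x.out.1:ℝ) - y.out.1)
    have h3 := le_abs_self ((y.out.1:ℝ) - z.out.1)
    have h4 := neg_abs_le ((y.out.1:ℝ) - z.out.1)
    split_ifs <;> try linarith
    all_goals simp_all
  eq_of_dist_eq_zero := by
    intro x y h
    replace h : hedgehogDist x y = 0 := h
    unfold hedgehogDist at h
    have hx0 : (0:ℝ) ≤ x.out.1 := x.out.1.2.1
    have hy0 : (0:ℝ) ≤ y.out.1 := y.out.1.2.1
    rw [← Quotient.out_eq x, ← Quotient.out_eq y]
    split_ifs at h with hc
    · have h1 : (x.out.1:ℝ) = y.out.1 := by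
        have := abs_eq_zero.mp h
        linarith
      have : x.out = y.out := Prod.ext (Subtype.ext h1) hc
      rw [this]
    · exact Quotient.sound (Or.inl ⟨by linarith, by linarith⟩)

/-- The topology of the metric hedgehog `MJ(κ)`. -/
noncomputable def metricHedgehogTop (I : Type u) : TopologicalSpace (Hedgehog I) :=
  (metricHedgehog I).toUniformSpace.toTopologicalSpace

/-- The bijection `Φ` from the hedgehog onto the axes `L(κ)` of the cube `[0,1]^I`,
viewed as a map into the cube: `Φ(t,i)(j) = t` if `j = i` and `0` otherwise. -/
noncomputable def hedgehogPhi {I : Type u} : Hedgehog I → (I → Set.Icc (0:ℝ) 1) :=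
  fun x j => hedgehogProj j x

/-- The topology of the compact hedgehog `ΛJ(κ)`: the topology transported along `Φ`
from the subspace `L(κ)` of the Tychonoff cube `[0,1]^I`, i.e. the topology induced by `Φ`
from the product topology. -/
noncomputable def compactHedgehogTop (I : Type u) : TopologicalSpace (Hedgehog I) :=
  TopologicalSpace.induced hedgehogPhi inferInstance

/-- The weight of a topological space: the minimum cardinality of a basis of its topology. -/
noncomputable def weight (X : Type u) [TopologicalSpace X] : Cardinal.{u} :=
  sInf { c : Cardinal.{u} | ∃ B : Set (Set X), TopologicalSpace.IsTopologicalBasis B ∧ #B = c }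

/-- A family `A` of subsets of a topological space is discrete if every point has a
neighborhood meeting `A i` for at most one index `i`. -/
def IsDiscreteFamily {X : Type*} [TopologicalSpace X] {ι : Type*} (A : ι → Set X) : Prop :=
  ∀ x : X, ∃ N ∈ nhds x, { i | (A i ∩ N).Nonempty }.Subsingleton

/-- A set-indexed family of subsets of a topological space is discrete if every point has a
neighborhood meeting at most one member of the family. -/
def IsDiscreteSetFamily {X : Type*} [TopologicalSpace X] (𝒜 : Set (Set X)) : Prop :=
  ∀ x : X, ∃ N ∈ nhds x, { A ∈ 𝒜 | (A ∩ N).Nonempty }.Subsingleton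

/-- A topological space `X` is `κ`-collectionwise normal if every discrete family of closed
sets indexed by a set of cardinality `κ` can be separated by a pairwise disjoint family of
open sets. -/
def IsCollectionwiseNormalWrt (κ : Cardinal.{u}) (X : Type v) [TopologicalSpace X] : Prop :=
  ∀ (ι : Type u) (F : ι → Set X), #ι = κ → (∀ i, IsClosed (F i)) → IsDiscreteFamily F →
    ∃ U : ι → Set X, (∀ i, IsOpen (U i)) ∧ (Pairwise fun i j => Disjoint (U i) (U j)) ∧
      ∀ i, F i ⊆ U i

/-- A topological space is completely metrizable if its topology is induced by some
complete metric. -/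
def IsCompletelyMetrizable (X : Type*) [t : TopologicalSpace X] : Prop :=
  ∃ m : MetricSpace X, m.toUniformSpace.toTopologicalSpace = t ∧
    @CompleteSpace X m.toUniformSpace

/-!
Well-order the index set and, for a radius `r > 0`, let the `r`-core of `U i` consist of the
points for which `i` is the first index of a member of the cover containing them and whose
`3r`-ball lies in `U i`. Cores of distinct indices are `3r`-separated: if `i < j` and `c'` lies
in the core of `U j`, then `c' ∉ U i`, while `U i` contains the `3r`-ball around every point of
the core of `U i`. Hence the `r`-neighbourhoods of the cores form a discrete family of open sets
refining the cover, and letting `r` run through `1 / (n + 1)` they cover the space.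
-/

open Metric

section StoneCells

variable {X : Type*} [PseudoMetricSpace X] {ι : Type*} [LinearOrder ι] (U : ι → Set X)

def stoneCore (r : ℝ) (i : ι) : Set X :=
  {x | (∀ j < i, x ∉ U j) ∧ ball x (3 * r) ⊆ U i}

def stoneCell (r : ℝ) (i : ι) : Set X :=
  ⋃ x ∈ stoneCore U r i, ball x r

theorem isOpen_stoneCell (r : ℝ) (i : ι) : IsOpen (stoneCell U r i) :=
  isOpen_biUnion fun _ _ => isOpen_ball

theorem stoneCell_subset {r : ℝ} (hr : 0 ≤ r) (i : ι) : stoneCell U r i ⊆ U i :=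
  iUnion₂_subset fun _ hx => (ball_subset_ball (by linarith)).trans hx.2

theorem three_mul_le_dist_of_mem_stoneCore {r : ℝ} {i j : ι} (hij : i ≠ j) {c c' : X}
    (hc : c ∈ stoneCore U r i) (hc' : c' ∈ stoneCore U r j) : 3 * r ≤ dist c c' := by
  wlog hlt : i < j generalizing i j c c'
  · rw [dist_comm]
    exact this hij.symm hc' hc (hij.symm.lt_of_le (not_lt.1 hlt))
  by_contra! hlt'
  exact hc'.1 i hlt (hc.2 (mem_ball'.2 hlt'))

theorem isDiscreteFamily_stoneCell {r : ℝ} (hr : 0 < r) : IsDiscreteFamily (stoneCell U r) := by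
  intro x
  refine ⟨ball x (r / 2), ball_mem_nhds x (half_pos hr), ?_⟩
  rintro i ⟨p, hpi, hpx⟩ j ⟨q, hqj, hqx⟩
  obtain ⟨c, hc, hpc⟩ := mem_iUnion₂.1 hpi
  obtain ⟨c', hc', hqc'⟩ := mem_iUnion₂.1 hqj
  by_contra hij
  have hclose : dist c c' < 3 * r :=
    calc dist c c' ≤ dist c p + (dist p x + dist x q) + dist q c' := by
          linarith [dist_triangle4 c p q c', dist_triangle p x q]
      _ < r + (r / 2 + r / 2) + r := by
          gcongr
          · exact mem_ball'.1 hpc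
          · exact mem_ball.1 hpx
          · exact mem_ball'.1 hqx
          · exact mem_ball.1 hqc'
      _ = 3 * r := by ring
  exact (three_mul_le_dist_of_mem_stoneCore U hij hc hc').not_gt hclose

theorem exists_mem_stoneCell [WellFoundedLT ι] (hU : ∀ i, IsOpen (U i)) {x : X}
    (hx : x ∈ ⋃ i, U i) : ∃ n : ℕ, ∃ i, x ∈ stoneCell U (1 / (n + 1)) i := by
  obtain ⟨i, hxi, hfirst⟩ := wellFounded_lt.has_min {i | x ∈ U i} (mem_iUnion.1 hx)
  obtain ⟨ε, hε, hball⟩ := isOpen_iff.1 (hU i) x hxi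
  obtain ⟨n, hn⟩ := exists_nat_one_div_lt (div_pos hε three_pos)
  have hcore : x ∈ stoneCore U (1 / (n + 1)) i :=
    ⟨fun j hj hxj => hfirst j hxj hj,
      (ball_subset_ball (by linarith)).trans hball⟩
  exact ⟨n, i, mem_biUnion hcore (mem_ball_self (by positivity))⟩

end StoneCells

theorem IsDiscreteFamily.isDiscreteSetFamily_range {X : Type*} [TopologicalSpace X]
    {ι : Type*} {A : ι → Set X} (hA : IsDiscreteFamily A) : IsDiscreteSetFamily (range A) := by
  intro x
  obtain ⟨N, hN, hsub⟩ := hA x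
  refine ⟨N, hN, ?_⟩
  rintro _ ⟨⟨i, rfl⟩, hi⟩ _ ⟨⟨j, rfl⟩, hj⟩
  rw [hsub hi hj]

/-- Stone's theorem: every open cover of a metrizable space has a σ-discrete open
refinement. -/
theorem stone_sigma_discrete_refinement (X : Type*) [TopologicalSpace X]
    [TopologicalSpace.MetrizableSpace X] {ι : Type*} (U : ι → Set X)
    (hUo : ∀ i, IsOpen (U i)) (hUc : ⋃ i, U i = Set.univ) :
    ∃ V : ℕ → Set (Set X),
      (∀ n, ∀ W ∈ V n, IsOpen W) ∧
      ⋃₀ (⋃ n, V n) = Set.univ ∧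
      (∀ n, ∀ W ∈ V n, ∃ i, W ⊆ U i) ∧
      (∀ n, IsDiscreteSetFamily (V n)) := by
  let := TopologicalSpace.pseudoMetrizableSpacePseudoMetric X
  obtain ⟨_, _⟩ := exists_wellFoundedLT ι
  refine ⟨fun n => range (stoneCell U (1 / (n + 1))), ?_, ?_, ?_, ?_⟩
  · rintro n _ ⟨i, rfl⟩
    exact isOpen_stoneCell U _ i
  · refine eq_univ_of_forall fun x => ?_
    obtain ⟨n, i, hx⟩ := exists_mem_stoneCell U hUo (hUc ▸ mem_univ x)
    exact mem_sUnion.2 ⟨_, mem_iUnion.2 ⟨n, i, rfl⟩, hx⟩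
  · rintro n _ ⟨i, rfl⟩
    exact ⟨i, stoneCell_subset U (by positivity) i⟩
  · exact fun n => (isDiscreteFamily_stoneCell U (by positivity)).isDiscreteSetFamily_range
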